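/- arXiv:1205.4315 — 5 statements merged into one kernel-verified Lean document; each statement's English description precedes it below -/
import Mathlib

section
/- Let v_n : ℕ × {0,1} → ℝ be defined by the recursion: v_0(x,i)=0; v_{n+1}(x,1) = max{R + v_{n+1}(x+1,0), v_{n+1}(x,0)}; v_{n+1}(x,0) = -h(x) + λ·v_n(x,1) + μ_l·v_n(x-1,0) + max{δ·v_n(x,0), -c + δ·v_n(x-1,0)} for x > 0; v_{n+1}(0,0) = λ·v_n(0,1) + μ_h·v_n(0,0). Then for every n and i ∈ {0,1}, the function x ↦ v_n(x,i) is nonincreasing in x. -/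
/-- The finite-horizon value function `v n x i` of the joint admission/service
control MDP (here `i : Bool`, with `false` for states `(x,0)` and `true` for
states `(x,1)`) is nonincreasing in the number of customers `x`. -/
theorem value_nonincreasing
    (lam mul muh R c : ℝ) (h : ℕ → ℝ) (v : ℕ → ℕ → Bool → ℝ)
    (hlam : 0 < lam) (hmul : 0 < mul) (hmuh : mul < muh)
    (hR : 0 ≤ R) (hc : 0 ≤ c) (hmono : Monotone h) (h0 : h 0 = 0)
    (hv0 : ∀ x i, v 0 x i = 0)
    (hv1 : ∀ n x, v (n + 1) x true
      = max (R + v (n + 1) (x + 1) false) (v (n + 1) x false))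
    (hv2 : ∀ n x, v (n + 1) (x + 1) false
      = -h (x + 1) + lam * v n (x + 1) true + mul * v n x false
        + max ((muh - mul) * v n (x + 1) false) (-c + (muh - mul) * v n x false))
    (hv3 : ∀ n, v (n + 1) 0 false = lam * v n 0 true + muh * v n 0 false) :
    ∀ n i, Antitone (fun x => v n x i) := by
  have hd : 0 < muh - mul := sub_pos.mpr hmuh
  have hh : ∀ x, 0 ≤ h x := fun x => h0 ▸ hmono (Nat.zero_le x)
  have Sf : ∀ n x, v n (x + 1) false ≤ v n x false := by
    intro n
    induction n with
    | zero => intro x; simp [hv0]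
    | succ n ih =>
      have St : ∀ x, v n (x + 1) true ≤ v n x true := by
        intro x
        cases n with
        | zero => simp [hv0]
        | succ m =>
          rw [hv1, hv1]
          exact max_le_max (by linarith [ih (x + 1)]) (ih x)
      intro x
      cases x with
      | zero =>
        rw [hv2 n 0, hv3 n]
        have h1 : max ((muh - mul) * v n (0 + 1) false) (-c + (muh - mul) * v n 0 false)
            ≤ (muh - mul) * v n 0 false := by
          apply max_le
          · nlinarith [ih 0]
          · linarith
        have h2 := hh (0 + 1)
        have h3 := mul_le_mul_of_nonneg_left (St 0) hlam.le
        nlinarith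
      | succ x =>
        rw [hv2 n (x + 1), hv2 n x]
        have h1 := mul_le_mul_of_nonneg_left (St (x + 1)) hlam.le
        have h2 := mul_le_mul_of_nonneg_left (ih x) hmul.le
        have h3 : max ((muh - mul) * v n (x + 1 + 1) false) (-c + (muh - mul) * v n (x + 1) false)
            ≤ max ((muh - mul) * v n (x + 1) false) (-c + (muh - mul) * v n x false) := by
          apply max_le_max
          · nlinarith [ih (x + 1)]
          · nlinarith [ih x]
        have h4 : h (x + 1) ≤ h (x + 1 + 1) := hmono (by omega)
        linarith
  have St : ∀ n x, v n (x + 1) true ≤ v n x true := by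
    intro n x
    cases n with
    | zero => simp [hv0]
    | succ m =>
      rw [hv1, hv1]
      exact max_le_max (by linarith [Sf (m + 1) (x + 1)]) (Sf (m + 1) x)
  intro n i
  apply antitone_nat_of_succ_le
  intro x
  cases i
  · exact Sf n x
  · exact St n x
end

section
/- With v_n defined by the joint admission/service control recursion and Δ_n(x,i) = v_n(x,i) - v_n(x+1,i), the quantity Δ_{n+1}(0,0) equals h(1) + λ·Δ_n(0,1) + min{δ·Δ_n(0,0), c}, and hence Δ_{n+1}(0,0) ≥ 0 whenever Δ_n(0,1) ≥ 0 and Δ_n(0,0) ≥ 0. -/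
/-- For the joint admission/service control value iteration, the first
difference at zero satisfies
`Δ_{n+1}(0,0) = h(1) + λ Δ_n(0,1) + min(δ Δ_n(0,0), c)`, hence it is
nonnegative whenever `Δ_n(0,1) ≥ 0` and `Δ_n(0,0) ≥ 0`. -/
theorem delta_zero_identity
    (lam mul muh R c : ℝ) (h : ℕ → ℝ) (v : ℕ → ℕ → Bool → ℝ)
    (hlam : 0 < lam) (hmul : 0 < mul) (hmuh : mul < muh)
    (hR : 0 ≤ R) (hc : 0 ≤ c) (hmono : Monotone h) (h0 : h 0 = 0)
    (hv0 : ∀ x i, v 0 x i = 0)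
    (hv1 : ∀ n x, v (n + 1) x true
      = max (R + v (n + 1) (x + 1) false) (v (n + 1) x false))
    (hv2 : ∀ n x, v (n + 1) (x + 1) false
      = -h (x + 1) + lam * v n (x + 1) true + mul * v n x false
        + max ((muh - mul) * v n (x + 1) false) (-c + (muh - mul) * v n x false))
    (hv3 : ∀ n, v (n + 1) 0 false = lam * v n 0 true + muh * v n 0 false) :
    ∀ n, (v (n + 1) 0 false - v (n + 1) 1 false
        = h 1 + lam * (v n 0 true - v n 1 true)
          + min ((muh - mul) * (v n 0 false - v n 1 false)) c)
      ∧ (0 ≤ v n 0 true - v n 1 true → 0 ≤ v n 0 false - v n 1 false →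
          0 ≤ v (n + 1) 0 false - v (n + 1) 1 false) := by
  intro n
  have key : v (n + 1) 0 false - v (n + 1) 1 false
      = h 1 + lam * (v n 0 true - v n 1 true)
        + min ((muh - mul) * (v n 0 false - v n 1 false)) c := by
    have e2 := hv2 n 0
    have e3 := hv3 n
    rcases le_total ((muh - mul) * v n 1 false) (-c + (muh - mul) * v n 0 false) with hle | hle
    · rw [max_eq_right hle] at e2
      have : (muh - mul) * (v n 0 false - v n 1 false) ≥ c := by nlinarith
      rw [min_eq_right this]
      rw [e2, e3]; ring
    · rw [max_eq_left hle] at e2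
      have : (muh - mul) * (v n 0 false - v n 1 false) ≤ c := by nlinarith
      rw [min_eq_left this]
      rw [e2, e3]; ring
  refine ⟨key, fun h1 h2 => ?_⟩
  rw [key]
  have hh1 : 0 ≤ h 1 := h0 ▸ hmono (Nat.zero_le 1)
  have : 0 ≤ min ((muh - mul) * (v n 0 false - v n 1 false)) c :=
    le_min (mul_nonneg (by linarith) h2) hc
  nlinarith
end

section
/- Let v_n be defined by the joint admission/service control recursion with h : ℕ → ℝ nondecreasing convex and h(0)=0. Then for every n and i ∈ {0,1}, the function x ↦ v_n(x,i) is concave in x, i.e., Δ_n(x,i) = v_n(x,i) - v_n(x+1,i) is nondecreasing in x. -/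
/-- With a nondecreasing convex holding cost, the joint admission/service
control value function `v n x i` is concave in `x`: the first difference
`Δ_n(x,i) = v_n(x,i) − v_n(x+1,i)` is nondecreasing in `x`. -/
theorem value_concave
    (lam mul muh R c : ℝ) (h : ℕ → ℝ) (v : ℕ → ℕ → Bool → ℝ)
    (hlam : 0 < lam) (hmul : 0 < mul) (hmuh : mul < muh)
    (hR : 0 ≤ R) (hc : 0 ≤ c) (hmono : Monotone h) (h0 : h 0 = 0)
    (hconv : ∀ x : ℕ, h (x + 1) - h x ≤ h (x + 2) - h (x + 1))
    (hv0 : ∀ x i, v 0 x i = 0)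
    (hv1 : ∀ n x, v (n + 1) x true
      = max (R + v (n + 1) (x + 1) false) (v (n + 1) x false))
    (hv2 : ∀ n x, v (n + 1) (x + 1) false
      = -h (x + 1) + lam * v n (x + 1) true + mul * v n x false
        + max ((muh - mul) * v n (x + 1) false) (-c + (muh - mul) * v n x false))
    (hv3 : ∀ n, v (n + 1) 0 false = lam * v n 0 true + muh * v n 0 false) :
    ∀ n i, Monotone (fun x => v n x i - v n (x + 1) i) := by
  have hδ : (0:ℝ) ≤ muh - mul := by linarith
  have mulle : ∀ (a : ℝ) {b c' : ℝ}, 0 ≤ a → b ≤ c' → a * b ≤ a * c' :=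
    fun a _ _ ha hb => mul_le_mul_of_nonneg_left hb ha
  -- main joint induction: nonincreasing and concave
  have main : ∀ n, (∀ x i, v n (x+1) i ≤ v n x i) ∧
      (∀ x i, v n x i + v n (x+2) i ≤ 2 * v n (x+1) i) := by
    intro n
    induction n with
    | zero => constructor <;> intro x i <;> simp [hv0]
    | succ n ih =>
      obtain ⟨mono, conc⟩ := ih
      -- false component nonincreasing
      have monoF : ∀ x, v (n+1) (x+1) false ≤ v (n+1) x false := by
        intro x
        cases x with
        | zero =>
          rw [hv2 n 0, hv3 n]
          have e1 : lam * v n 1 true ≤ lam * v n 0 true := mulle _ hlam.le (mono 0 true)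
          have e2 : (muh - mul) * v n 1 false ≤ (muh - mul) * v n 0 false :=
            mulle _ hδ (mono 0 false)
          have e3 : max ((muh - mul) * v n 1 false) (-c + (muh - mul) * v n 0 false)
              ≤ (muh - mul) * v n 0 false := max_le (by linarith) (by linarith)
          have e4 : 0 ≤ h 1 := by have := hmono (Nat.zero_le 1); linarith [h0 ▸ this]
          have e5 : muh * v n 0 false
              = mul * v n 0 false + (muh - mul) * v n 0 false := by ring
          norm_num
          linarith
        | succ y =>
          rw [hv2 n (y+1), hv2 n y]
          have e1 : h (y+1) ≤ h (y+2) := hmono (by omega)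
          have e2 : lam * v n (y+2) true ≤ lam * v n (y+1) true :=
            mulle _ hlam.le (mono (y+1) true)
          have e3 : mul * v n (y+1) false ≤ mul * v n y false :=
            mulle _ hmul.le (mono y false)
          have e4 : max ((muh - mul) * v n (y+2) false) (-c + (muh - mul) * v n (y+1) false)
              ≤ max ((muh - mul) * v n (y+1) false) (-c + (muh - mul) * v n y false) :=
            max_le_max (mulle _ hδ (mono (y+1) false))
              (by linarith [mulle _ hδ (mono y false)])
          linarith
      -- false component concave
      have concF : ∀ x, v (n+1) x false + v (n+1) (x+2) false ≤ 2 * v (n+1) (x+1) false := by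
        intro x
        cases x with
        | zero =>
          have e0 := hv3 n
          have e1 := hv2 n 0
          have e2 := hv2 n 1
          norm_num at e1 e2
          rw [e0, e1, e2]
          have hh : 2 * h 1 ≤ h 2 := by have := hconv 0; norm_num at this; linarith
          have hg : lam * (v n 0 true + v n 2 true) ≤ lam * (2 * v n 1 true) := by
            have := conc 0 true; norm_num at this; exact mulle _ hlam.le this
          have hf1 : mul * v n 1 false ≤ mul * v n 0 false := mulle _ hmul.le (mono 0 false)
          have hcc : (muh - mul) * (v n 0 false + v n 2 false)
              ≤ (muh - mul) * (2 * v n 1 false) := by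
            have := conc 0 false; norm_num at this; exact mulle _ hδ this
          have hM1a : (muh - mul) * v n 1 false
              ≤ max ((muh - mul) * v n 1 false) (-c + (muh - mul) * v n 0 false) :=
            le_max_left _ _
          have hM1b : -c + (muh - mul) * v n 0 false
              ≤ max ((muh - mul) * v n 1 false) (-c + (muh - mul) * v n 0 false) :=
            le_max_right _ _
          have hid : muh * v n 0 false
              = mul * v n 0 false + (muh - mul) * v n 0 false := by ring
          rcases max_cases ((muh - mul) * v n 2 false) (-c + (muh - mul) * v n 1 false) with
            ⟨hM2, _⟩ | ⟨hM2, _⟩ <;> rw [hM2] <;> nlinarith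
        | succ y =>
          rw [hv2 n y, hv2 n (y+1), hv2 n (y+2)]
          have hh : h (y+1) + h (y+3) ≥ 2 * h (y+2) := by
            have := hconv (y+1); linarith
          have hg : lam * (v n (y+1) true + v n (y+3) true)
              ≤ lam * (2 * v n (y+2) true) := by
            have := conc (y+1) true; exact mulle _ hlam.le this
          have hf : mul * (v n y false + v n (y+2) false)
              ≤ mul * (2 * v n (y+1) false) := mulle _ hmul.le (conc y false)
          have cA : (muh - mul) * (v n (y+1) false + v n (y+3) false)
              ≤ (muh - mul) * (2 * v n (y+2) false) := mulle _ hδ (conc (y+1) false)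
          have cB : (muh - mul) * (v n y false + v n (y+2) false)
              ≤ (muh - mul) * (2 * v n (y+1) false) := mulle _ hδ (conc y false)
          have cC : (muh - mul) * (v n y false + v n (y+3) false)
              ≤ (muh - mul) * (v n (y+1) false + v n (y+2) false) := by
            have h1 := conc y false
            have h2 := conc (y+1) false
            have : v n y false + v n (y+3) false
                ≤ v n (y+1) false + v n (y+2) false := by
              have h3 : y + 1 + 2 = y + 3 := by omega
              rw [h3] at h2
              linarith
            exact mulle _ hδ this
          have hMa : (muh - mul) * v n (y+2) false
              ≤ max ((muh - mul) * v n (y+2) false) (-c + (muh - mul) * v n (y+1) false) :=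
            le_max_left _ _
          have hMb : -c + (muh - mul) * v n (y+1) false
              ≤ max ((muh - mul) * v n (y+2) false) (-c + (muh - mul) * v n (y+1) false) :=
            le_max_right _ _
          rcases max_cases ((muh - mul) * v n (y+1) false) (-c + (muh - mul) * v n y false) with
            ⟨hM1, _⟩ | ⟨hM1, _⟩ <;>
          rcases max_cases ((muh - mul) * v n (y+3) false) (-c + (muh - mul) * v n (y+2) false) with
            ⟨hM3, _⟩ | ⟨hM3, _⟩ <;> rw [hM1, hM3] <;> nlinarith
      -- true component
      have monoT : ∀ x, v (n+1) (x+1) true ≤ v (n+1) x true := by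
        intro x
        rw [hv1 n x, hv1 n (x+1)]
        exact max_le_max (by linarith [monoF (x+1)]) (monoF x)
      have concT : ∀ x, v (n+1) x true + v (n+1) (x+2) true ≤ 2 * v (n+1) (x+1) true := by
        intro x
        rw [hv1 n x, hv1 n (x+1), hv1 n (x+2)]
        have hMa : R + v (n+1) (x+2) false
            ≤ max (R + v (n+1) (x+2) false) (v (n+1) (x+1) false) := le_max_left _ _
        have hMb : v (n+1) (x+1) false
            ≤ max (R + v (n+1) (x+2) false) (v (n+1) (x+1) false) := le_max_right _ _
        have c1 := concF x
        have c2 := concF (x+1)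
        have c3 : v (n+1) x false + v (n+1) (x+3) false
            ≤ v (n+1) (x+1) false + v (n+1) (x+2) false := by
          have h3 : x + 1 + 2 = x + 3 := by omega
          rw [h3] at c2; linarith
        rcases max_cases (R + v (n+1) (x+1) false) (v (n+1) x false) with
          ⟨hM1, _⟩ | ⟨hM1, _⟩ <;>
        rcases max_cases (R + v (n+1) (x+3) false) (v (n+1) (x+2) false) with
          ⟨hM3, _⟩ | ⟨hM3, _⟩ <;> rw [hM1]
        · rw [show x + 2 + 1 = x + 3 from by omega, hM3]; linarith
        · rw [hM3]; linarith
        · rw [show x + 2 + 1 = x + 3 from by omega, hM3]; linarith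
        · rw [hM3]; linarith
      refine ⟨fun x i => ?_, fun x i => ?_⟩ <;> cases i
      · exact monoF x
      · exact monoT x
      · exact concF x
      · exact concT x
  intro n i
  apply monotone_nat_of_le_succ
  intro x
  show v n x i - v n (x+1) i ≤ v n (x+1) i - v n (x+1+1) i
  have := (main n).2 x i
  have h1 : x + 1 + 1 = x + 2 := by omega
  rw [h1]
  linarith
end

section
/- With v_n the joint-control value function and v̂_n the admission-only value function (both with convex nondecreasing h), the value of service flexibility ε̂_n(x,i) = v_n(x,i) - v̂_n(x,i) is nondecreasing in x for every n and i ∈ {0,1}. -/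
/-- Concavity is preserved by the admission max-operator. -/
lemma max_concave_step (R b0 b1 b2 b3 : ℝ) (h01 : b2 - b1 ≤ b1 - b0) (h12 : b3 - b2 ≤ b2 - b1) :
    max (R + b3) b2 - max (R + b2) b1 ≤ max (R + b2) b1 - max (R + b1) b0 := by
  rcases max_cases (R + b3) b2 with ⟨e1, _⟩ | ⟨e1, _⟩ <;>
  rcases max_cases (R + b1) b0 with ⟨e2, _⟩ | ⟨e2, _⟩ <;>
  rw [e1, e2] <;>
  linarith [le_max_left (R + b2) b1, le_max_right (R + b2) b1]

/-- Difference domination is preserved by the admission max-operator,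
given concavity of the dominated function. -/
lemma max_dom_step (R a0 a1 a2 b0 b1 b2 : ℝ) (d0 : b1 - b0 ≤ a1 - a0)
    (d1 : b2 - b1 ≤ a2 - a1) (cb : b2 - b1 ≤ b1 - b0) :
    max (R + b2) b1 - max (R + b1) b0 ≤ max (R + a2) a1 - max (R + a1) a0 := by
  rcases max_cases (R + b2) b1 with ⟨e1, _⟩ | ⟨e1, _⟩ <;>
  rcases max_cases (R + a1) a0 with ⟨e2, _⟩ | ⟨e2, _⟩ <;>
  rw [e1, e2] <;>
  linarith [le_max_left (R + a2) a1, le_max_right (R + a2) a1,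
    le_max_left (R + b1) b0, le_max_right (R + b1) b0]

/-- The value of service flexibility `ε̂_n(x,i) = v_n(x,i) − v̂_n(x,i)`,
where `v` is the joint-control value function and `vhat` the admission-only
value function, is nondecreasing in the congestion level `x`. -/
theorem flexibility_value_monotone
    (lam mul muh R c : ℝ) (h : ℕ → ℝ) (v vhat : ℕ → ℕ → Bool → ℝ)
    (hlam : 0 < lam) (hmul : 0 < mul) (hmuh : mul < muh)
    (hR : 0 ≤ R) (hc : 0 ≤ c) (hmono : Monotone h) (h0 : h 0 = 0)
    (hconv : ∀ x : ℕ, h (x + 1) - h x ≤ h (x + 2) - h (x + 1))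
    (hv0 : ∀ x i, v 0 x i = 0)
    (hv1 : ∀ n x, v (n + 1) x true
      = max (R + v (n + 1) (x + 1) false) (v (n + 1) x false))
    (hv2 : ∀ n x, v (n + 1) (x + 1) false
      = -h (x + 1) + lam * v n (x + 1) true + mul * v n x false
        + max ((muh - mul) * v n (x + 1) false) (-c + (muh - mul) * v n x false))
    (hv3 : ∀ n, v (n + 1) 0 false = lam * v n 0 true + muh * v n 0 false)
    (hw0 : ∀ x i, vhat 0 x i = 0)
    (hw1 : ∀ n x, vhat (n + 1) x true
      = max (R + vhat (n + 1) (x + 1) false) (vhat (n + 1) x false))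
    (hw2 : ∀ n x, vhat (n + 1) (x + 1) false
      = -h (x + 1) + lam * vhat n (x + 1) true + mul * vhat n x false
        + (muh - mul) * vhat n (x + 1) false)
    (hw3 : ∀ n, vhat (n + 1) 0 false = lam * vhat n 0 true + muh * vhat n 0 false) :
    ∀ n i, Monotone (fun x => v n x i - vhat n x i) := by
  have hδ : (0:ℝ) < muh - mul := sub_pos.mpr hmuh
  have idx1 : ∀ k : ℕ, k + 1 + 1 = k + 2 := fun k => rfl
  have idx2 : ∀ k : ℕ, k + 2 + 1 = k + 3 := fun k => rfl
  -- transfer concavity from the false- to the true-component of vhat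
  have CBall : ∀ n,
      (∀ x, vhat n (x+2) false - vhat n (x+1) false ≤ vhat n (x+1) false - vhat n x false) →
      ∀ x, vhat n (x+2) true - vhat n (x+1) true ≤ vhat n (x+1) true - vhat n x true := by
    intro n C x
    cases n with
    | zero => simp [hw0]
    | succ m =>
      rw [hw1 m x, hw1 m (x+1), hw1 m (x+2), idx1, idx2]
      exact max_concave_step R _ _ _ _ (C x) (C (x+1))
  -- transfer difference domination to the true-component
  have DAall : ∀ n,
      (∀ x, vhat n (x+2) false - vhat n (x+1) false ≤ vhat n (x+1) false - vhat n x false) →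
      (∀ x, vhat n (x+1) false - vhat n x false ≤ v n (x+1) false - v n x false) →
      ∀ x, vhat n (x+1) true - vhat n x true ≤ v n (x+1) true - v n x true := by
    intro n C D x
    cases n with
    | zero => simp [hw0, hv0]
    | succ m =>
      rw [hw1 m x, hw1 m (x+1), hv1 m x, hv1 m (x+1), idx1]
      exact max_dom_step R _ _ _ _ _ _ (D x) (D (x+1)) (C x)
  -- transfer v̂ nonincreasing at 0 to the true-component
  have EBall : ∀ n,
      (∀ x, vhat n (x+2) false - vhat n (x+1) false ≤ vhat n (x+1) false - vhat n x false) →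
      vhat n 1 false ≤ vhat n 0 false →
      vhat n 1 true ≤ vhat n 0 true := by
    intro n C E
    cases n with
    | zero => simp [hw0]
    | succ m =>
      have idx0 : (0:ℕ) + 1 = 1 := rfl
      rw [hw1 m 0, hw1 m 1, idx1, idx0]
      have hC := C 0
      norm_num at hC
      apply max_le
      · exact le_trans (by linarith) (le_max_left (R + vhat (m+1) 1 false) (vhat (m+1) 0 false))
      · exact le_trans E (le_max_right _ _)
  -- joint induction: concavity of v̂(·,0), domination Δv̂ ≤ Δv, and v̂ 1 ≤ v̂ 0
  have key : ∀ n,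
      (∀ x, vhat n (x+2) false - vhat n (x+1) false ≤ vhat n (x+1) false - vhat n x false) ∧
      (∀ x, vhat n (x+1) false - vhat n x false ≤ v n (x+1) false - v n x false) ∧
      vhat n 1 false ≤ vhat n 0 false := by
    intro n
    induction n with
    | zero => refine ⟨fun x => ?_, fun x => ?_, ?_⟩ <;> simp [hw0, hv0]
    | succ n ih =>
      obtain ⟨C, D, E⟩ := ih
      have CB := CBall n C
      have DA := DAall n C D
      have EB := EBall n C E
      have h1nn : (0:ℝ) ≤ h 1 := by
        have := hmono (Nat.zero_le 1); linarith
      -- new concavity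
      have C' : ∀ x, vhat (n+1) (x+2) false - vhat (n+1) (x+1) false
          ≤ vhat (n+1) (x+1) false - vhat (n+1) x false := by
        intro x
        cases x with
        | zero =>
          have e2 := hw2 n 1
          have e1 := hw2 n 0
          have e0 := hw3 n
          norm_num at e2 e1
          rw [e2, e1, e0]
          have := hconv 0
          have f1 := mul_le_mul_of_nonneg_left (CB 0) hlam.le
          have f2 := mul_le_mul_of_nonneg_left E hmul.le
          have f3 := mul_le_mul_of_nonneg_left (C 0) hδ.le
          norm_num at f1 f3
          linarith
        | succ y =>
          have e2 := hw2 n (y+2)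
          have e1 := hw2 n (y+1)
          have e0 := hw2 n y
          rw [idx1, idx2] at *
          rw [e2, e1, e0]
          have := hconv (y+1)
          have f1 := mul_le_mul_of_nonneg_left (CB (y+1)) hlam.le
          have f2 := mul_le_mul_of_nonneg_left (C y) hmul.le
          have f3 := mul_le_mul_of_nonneg_left (C (y+1)) hδ.le
          linarith
      -- new domination
      have D' : ∀ x, vhat (n+1) (x+1) false - vhat (n+1) x false
          ≤ v (n+1) (x+1) false - v (n+1) x false := by
        intro x
        cases x with
        | zero =>
          have e1 := hw2 n 0
          have e0 := hw3 n
          have f1 := hv2 n 0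
          have f0 := hv3 n
          norm_num at e1 f1
          rw [e1, e0, f1, f0]
          have g1 := mul_le_mul_of_nonneg_left (DA 0) hlam.le
          have g2 := mul_le_mul_of_nonneg_left (D 0) hδ.le
          norm_num at g1 g2
          have g3 := le_max_left ((muh - mul) * v n 1 false) (-c + (muh - mul) * v n 0 false)
          linarith
        | succ y =>
          have e1 := hw2 n (y+1)
          have e0 := hw2 n y
          have f1 := hv2 n (y+1)
          have f0 := hv2 n y
          rw [idx1] at *
          rw [e1, e0, f1, f0]
          have g1 := mul_le_mul_of_nonneg_left (DA (y+1)) hlam.le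
          have g2 := mul_le_mul_of_nonneg_left (D y) hmul.le
          rcases le_total (-c + (muh - mul) * v n y false) ((muh - mul) * v n (y+1) false)
            with hm | hm
          · rw [max_eq_left hm]
            have g3 := le_max_left ((muh - mul) * v n (y+2) false)
              (-c + (muh - mul) * v n (y+1) false)
            have g4 := mul_le_mul_of_nonneg_left (D (y+1)) hδ.le
            linarith
          · rw [max_eq_right hm]
            have g3 := le_max_right ((muh - mul) * v n (y+2) false)
              (-c + (muh - mul) * v n (y+1) false)
            have g4 := mul_le_mul_of_nonneg_left (D y) hδ.le
            have g5 := mul_le_mul_of_nonneg_left (C y) hδ.le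
            linarith
      -- new nonincreasing at 0
      have E' : vhat (n+1) 1 false ≤ vhat (n+1) 0 false := by
        have e1 := hw2 n 0
        have e0 := hw3 n
        norm_num at e1
        rw [e1, e0]
        have g1 := mul_le_mul_of_nonneg_left EB hlam.le
        have g2 := mul_le_mul_of_nonneg_left E hδ.le
        linarith
      exact ⟨C', D', E'⟩
  intro n i
  apply monotone_nat_of_le_succ
  intro x
  cases i with
  | false =>
    have := (key n).2.1 x
    linarith
  | true =>
    have := DAall n (key n).1 (key n).2.1 x
    linarith
end

section
/- Suppose b^s ≥ b^d + 1 and consider the system of linear equations (policy evaluation for threshold policy π(b^s, b^d) in the combined problem): u(0,0) = λ u(0,1) + μ_h u(0,0); u(x,0) = -h(x) + λ u(x,1) + μ_l u(x-1,0) + δ u(x,0) for 1 ≤ x ≤ b^s; u(x,1) = R + u(x+1,0) for 0 ≤ x ≤ b^d; u(x,1) = u(x,0) for b^d + 1 ≤ x ≤ b^s. Then these equations coincide with the policy-evaluation equations of the admission-only policy π̂(b^d) restricted to states x ≤ b^s; in particular, if (u, û) are the unique solutions of the respective full systems, then u(x,i) = û(x,i) for all x = 0,…,b^s and i = 0,1.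 -/
/-!
Subtracting the two solutions gives a solution `w` of the homogeneous system (`R = 0`, `h = 0`).
Eliminating the states `(x, 1)`, each `w (x, 0)` with `x ≤ bˢ` is a combination of values
`w (y, 0)`, `y ≤ bˢ`, with nonnegative weights of total `λ + μ_h < 1`; here `bᵈ + 1 ≤ bˢ` keeps
the successor `x + 1` of an admitting state inside the range. At a state where `|w (·, 0)|` is
maximal this forces the maximum to vanish.
-/

theorem eq_zero_of_abs_le_mul_bound {ι : Type*} {s : Finset ι} {f : ι → ℝ} {q : ℝ} (hq : q < 1)
    (hf : ∀ M, (∀ y ∈ s, |f y| ≤ M) → ∀ x ∈ s, |f x| ≤ q * M) :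
    ∀ x ∈ s, f x = 0 := by
  intro x hx
  obtain ⟨x₀, hx₀, hmax⟩ := s.exists_max_image (fun y => |f y|) ⟨x, hx⟩
  have hself : |f x₀| ≤ q * |f x₀| := hf _ hmax x₀ hx₀
  have hzero : |f x₀| ≤ 0 := by nlinarith [abs_nonneg (f x₀)]
  exact abs_nonpos_iff.mp ((hmax x hx).trans hzero)

theorem abs_mul_add_mul_add_mul_le {a b c x y z M : ℝ} (ha : 0 ≤ a) (hb : 0 ≤ b) (hc : 0 ≤ c)
    (hx : |x| ≤ M) (hy : |y| ≤ M) (hz : |z| ≤ M) :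
    |a * x + b * y + c * z| ≤ (a + b + c) * M := by
  calc |a * x + b * y + c * z| ≤ |a * x| + |b * y| + |c * z| := abs_add_three _ _ _
    _ = a * |x| + b * |y| + c * |z| := by
      rw [abs_mul, abs_mul, abs_mul, abs_of_nonneg ha, abs_of_nonneg hb, abs_of_nonneg hc]
    _ ≤ a * M + b * M + c * M := by gcongr
    _ = (a + b + c) * M := by ring

/-- The policy-evaluation equations of the threshold policy on the states `x ≤ bs`;
`u x true` is the value at an arrival epoch with `x` customers present, when the admission
decision is taken. -/
structure IsPolicyEvaluation (lam mul muh R : ℝ) (h : ℕ → ℝ) (bs bd : ℕ)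
    (u : ℕ → Bool → ℝ) : Prop where
  empty : u 0 false = lam * u 0 true + muh * u 0 false
  busy : ∀ x : ℕ, 1 ≤ x → x ≤ bs →
    u x false = -h x + lam * u x true + mul * u (x - 1) false + (muh - mul) * u x false
  accept : ∀ x : ℕ, x ≤ bd → u x true = R + u (x + 1) false
  reject : ∀ x : ℕ, bd + 1 ≤ x → x ≤ bs → u x true = u x false

namespace IsPolicyEvaluation

variable {lam mul muh R : ℝ} {h : ℕ → ℝ} {bs bd : ℕ} {u w : ℕ → Bool → ℝ}

theorem sub {uhat : ℕ → Bool → ℝ} (hu : IsPolicyEvaluation lam mul muh R h bs bd u)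
    (hw : IsPolicyEvaluation lam mul muh R h bs bd uhat) :
    IsPolicyEvaluation lam mul muh 0 0 bs bd (u - uhat) where
  empty := by
    simp only [Pi.sub_apply]
    linear_combination hu.empty - hw.empty
  busy x hx₁ hx := by
    simp only [Pi.sub_apply, Pi.zero_apply]
    linear_combination hu.busy x hx₁ hx - hw.busy x hx₁ hx
  accept x hx := by
    simp only [Pi.sub_apply]
    linear_combination hu.accept x hx - hw.accept x hx
  reject x hx₁ hx := by
    simp only [Pi.sub_apply]
    linear_combination hu.reject x hx₁ hx - hw.reject x hx₁ hx

section Homogeneous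

variable (hw : IsPolicyEvaluation lam mul muh 0 0 bs bd w)
include hw

theorem exists_true_eq_false (hbsd : bd + 1 ≤ bs) {x : ℕ} (hx : x ≤ bs) :
    ∃ y ≤ bs, w x true = w y false := by
  by_cases hxd : x ≤ bd
  · exact ⟨x + 1, by omega, by rw [hw.accept x hxd, zero_add]⟩
  · exact ⟨x, hx, hw.reject x (by omega) hx⟩

/-- At `x = 0` the truncated subtraction `0 - 1 = 0` turns the departure term into
`mul * w 0 false`, so one equation covers all states. -/
theorem false_eq {x : ℕ} (hx : x ≤ bs) :
    w x false = lam * w x true + mul * w (x - 1) false + (muh - mul) * w x false := by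
  rcases Nat.eq_zero_or_pos x with rfl | hx₁
  · linear_combination hw.empty
  · have hbusy := hw.busy x hx₁ hx
    rw [Pi.zero_apply] at hbusy
    linear_combination hbusy

theorem false_eq_zero (hlam : 0 ≤ lam) (hmul : 0 ≤ mul) (hmuh : mul ≤ muh)
    (hdisc : lam + muh < 1) (hbsd : bd + 1 ≤ bs) :
    ∀ x ∈ Finset.Iic bs, w x false = 0 := by
  refine eq_zero_of_abs_le_mul_bound (f := fun x => w x false) hdisc fun M hM x hx => ?_
  rw [Finset.mem_Iic] at hx
  have hM' : ∀ y ≤ bs, |w y false| ≤ M := fun y hy => hM y (Finset.mem_Iic.mpr hy)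
  obtain ⟨y, hy, hxy⟩ := hw.exists_true_eq_false hbsd hx
  calc |w x false| = |lam * w x true + mul * w (x - 1) false + (muh - mul) * w x false| := by
        rw [← hw.false_eq hx]
    _ ≤ (lam + mul + (muh - mul)) * M :=
        abs_mul_add_mul_add_mul_le hlam hmul (sub_nonneg.mpr hmuh) (hxy ▸ hM' y hy)
          (hM' _ (by omega)) (hM' x hx)
    _ = (lam + muh) * M := by ring

theorem eq_zero (hlam : 0 ≤ lam) (hmul : 0 ≤ mul) (hmuh : mul ≤ muh)
    (hdisc : lam + muh < 1) (hbsd : bd + 1 ≤ bs) {x : ℕ} (hx : x ≤ bs) (i : Bool) :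
    w x i = 0 := by
  have hfalse := hw.false_eq_zero hlam hmul hmuh hdisc hbsd
  cases i with
  | false => exact hfalse x (Finset.mem_Iic.mpr hx)
  | true =>
    obtain ⟨y, hy, hxy⟩ := hw.exists_true_eq_false hbsd hx
    rw [hxy, hfalse y (Finset.mem_Iic.mpr hy)]

end Homogeneous

end IsPolicyEvaluation

theorem policy_evaluation_coincide_general
    (lam mul muh beta R : ℝ) (h : ℕ → ℝ) (bs bd : ℕ)
    (u uhat : ℕ → Bool → ℝ)
    (hlam : 0 < lam) (hmul : 0 < mul) (hmuh : mul < muh) (hbeta : 0 < beta)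
    (hnorm : lam + muh + beta = 1)
    (hbsd : bd + 1 ≤ bs)
    -- policy evaluation equations for the combined problem under π(bs, bd)
    (hu0 : u 0 false = lam * u 0 true + muh * u 0 false)
    (hu1 : ∀ x : ℕ, 1 ≤ x → x ≤ bs →
      u x false = -h x + lam * u x true + mul * u (x - 1) false
        + (muh - mul) * u x false)
    (hu2 : ∀ x : ℕ, x ≤ bd → u x true = R + u (x + 1) false)
    (hu3 : ∀ x : ℕ, bd + 1 ≤ x → x ≤ bs → u x true = u x false)
    -- policy evaluation equations for the admission-only problem under π̂(bd),
    -- restricted to states x ≤ bs: they are identical to those above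
    (hw0 : uhat 0 false = lam * uhat 0 true + muh * uhat 0 false)
    (hw1 : ∀ x : ℕ, 1 ≤ x → x ≤ bs →
      uhat x false = -h x + lam * uhat x true + mul * uhat (x - 1) false
        + (muh - mul) * uhat x false)
    (hw2 : ∀ x : ℕ, x ≤ bd → uhat x true = R + uhat (x + 1) false)
    (hw3 : ∀ x : ℕ, bd + 1 ≤ x → x ≤ bs → uhat x true = uhat x false) :
    ∀ x : ℕ, x ≤ bs → ∀ i : Bool, u x i = uhat x i := by
  have hdiff : IsPolicyEvaluation lam mul muh 0 0 bs bd (u - uhat) :=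
    IsPolicyEvaluation.sub ⟨hu0, hu1, hu2, hu3⟩ ⟨hw0, hw1, hw2, hw3⟩
  intro x hx i
  exact sub_eq_zero.mp <|
    hdiff.eq_zero hlam.le hmul.le hmuh.le (by linarith) hbsd hx i

/-- When `b^s ≥ b^d + 1`, the policy-evaluation equations of the threshold
policy `π(b^s, b^d)` in the combined problem, restricted to states `x ≤ b^s`,
coincide with those of the admission-only policy `π̂(b^d)`; since the linear
system has a unique solution, the two value functions agree on these states:
any `u` and `û` satisfying the (identical) equations coincide for `x ≤ b^s`. -/
theorem policy_evaluation_coincide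
    (lam mul muh beta R c : ℝ) (h : ℕ → ℝ) (bs bd : ℕ)
    (u uhat : ℕ → Bool → ℝ)
    (hlam : 0 < lam) (hmul : 0 < mul) (hmuh : mul < muh) (hbeta : 0 < beta)
    (hnorm : lam + muh + beta = 1)
    (hR : 0 ≤ R) (hc : 0 ≤ c) (h0 : h 0 = 0)
    (hbsd : bd + 1 ≤ bs)
    -- policy evaluation equations for the combined problem under π(bs, bd)
    (hu0 : u 0 false = lam * u 0 true + muh * u 0 false)
    (hu1 : ∀ x : ℕ, 1 ≤ x → x ≤ bs →
      u x false = -h x + lam * u x true + mul * u (x - 1) false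
        + (muh - mul) * u x false)
    (hu2 : ∀ x : ℕ, x ≤ bd → u x true = R + u (x + 1) false)
    (hu3 : ∀ x : ℕ, bd + 1 ≤ x → x ≤ bs → u x true = u x false)
    -- policy evaluation equations for the admission-only problem under π̂(bd),
    -- restricted to states x ≤ bs: they are identical to those above
    (hw0 : uhat 0 false = lam * uhat 0 true + muh * uhat 0 false)
    (hw1 : ∀ x : ℕ, 1 ≤ x → x ≤ bs →
      uhat x false = -h x + lam * uhat x true + mul * uhat (x - 1) false
        + (muh - mul) * uhat x false)
    (hw2 : ∀ x : ℕ, x ≤ bd → uhat x true = R + uhat (x + 1) false)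
    (hw3 : ∀ x : ℕ, bd + 1 ≤ x → x ≤ bs → uhat x true = uhat x false) :
    ∀ x : ℕ, x ≤ bs → ∀ i : Bool, u x i = uhat x i :=
  policy_evaluation_coincide_general lam mul muh beta R h bs bd u uhat hlam hmul hmuh hbeta hnorm
    hbsd hu0 hu1 hu2 hu3 hw0 hw1 hw2 hw3
end
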